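/- arXiv:2103.15511 — 8 statements merged into one kernel-verified Lean document; each statement's English description precedes it below -/
import Mathlib

section
/- Let M ≥ 4 be a perfect square integer, N ≥ 2 an even integer, c = 3/(2(M−1)), and γ > 0. Define f(t) = exp(−c·γ/sin²(t)) for t > 0 and f(0) = 0 (the continuous extension at 0), and set a₁ = 4(√M − 1)/√M and a₂ = 4((√M − 1)/√M)². Then the difference between the trapezoidal-rule approximation of (a₁/π)∫₀^{π/2} f(t) dt with N equal subintervals and the trapezoidal-rule approximation of (a₂/π)∫₀^{π/4} f(t) dt with N/2 equal subintervals (both with node spacing π/(2N)) equals Σ_{n=1}^{N} θ_n·exp(−δ_n·γ), where δ_n = 3/(2(M−1)·sin²(n·π/(2N))), θ_n = 2(√M − 1)/(N·M) for 1 ≤ n ≤ N/2 − 1, θ_{N/2} = (M−1)/(N·M), θ_n = 2(√M − 1)/(N·√M) for N/2 + 1 ≤ n ≤ N − 1, and θ_N = (√M − 1)/(N·√M). -/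
open Real Finset

theorem stmt_8 (M N : ℕ) (hM : 4 ≤ M) (hMsq : ∃ k : ℕ, M = k ^ 2)
    (hN : 2 ≤ N) (hNeven : Even N) (γ : ℝ) (hγ : 0 < γ)
    (c a₁ a₂ : ℝ) (hc : c = 3 / (2 * ((M : ℝ) - 1)))
    (ha₁ : a₁ = 4 * (Real.sqrt M - 1) / Real.sqrt M)
    (ha₂ : a₂ = 4 * ((Real.sqrt M - 1) / Real.sqrt M) ^ 2)
    (f : ℝ → ℝ)
    (hf : ∀ t : ℝ, t ≠ 0 → f t = Real.exp (-(c * γ) / Real.sin t ^ 2))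
    (hf0 : f 0 = 0)
    (θ δ : ℕ → ℝ)
    (hθ : ∀ n, θ n =
      if n = N then (Real.sqrt M - 1) / (N * Real.sqrt M)
      else if n = N / 2 then ((M : ℝ) - 1) / (N * M)
      else if n < N / 2 then 2 * (Real.sqrt M - 1) / (N * M)
      else 2 * (Real.sqrt M - 1) / (N * Real.sqrt M))
    (hδ : ∀ n, δ n = 3 / (2 * ((M : ℝ) - 1) * Real.sin ((n : ℝ) * π / (2 * N)) ^ 2)) :
    (a₁ / π) * (π / (2 * N)) *
        (f 0 / 2 + (∑ n ∈ Finset.Ico 1 N, f ((n : ℝ) * (π / (2 * N)))) + f (π / 2) / 2) -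
      (a₂ / π) * (π / (2 * N)) *
        (f 0 / 2 + (∑ n ∈ Finset.Ico 1 (N / 2), f ((n : ℝ) * (π / (2 * N)))) + f (π / 4) / 2) =
      ∑ n ∈ Finset.Icc 1 N, θ n * Real.exp (-(δ n) * γ) := by
  obtain ⟨k, hk⟩ := hMsq
  obtain ⟨m, hm⟩ := hNeven
  have hmN : N = 2 * m := by omega
  have hk2 : 2 ≤ k := by nlinarith [hM, hk]
  have hm1 : 1 ≤ m := by omega
  have hN2 : N / 2 = m := by omega
  have hNpos : (0:ℝ) < (N:ℝ) := by exact_mod_cast (by omega : 0 < N)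
  have hkpos : (0:ℝ) < (k:ℝ) := by exact_mod_cast (by omega : 0 < k)
  have hMcast : (M:ℝ) = (k:ℝ)^2 := by rw [hk]; push_cast; ring
  have hsqrt : Real.sqrt M = (k:ℝ) := by
    rw [hMcast, Real.sqrt_sq hkpos.le]
  have hπ : (0:ℝ) < π := Real.pi_pos
  set E : ℕ → ℝ := fun n => Real.exp (-(δ n) * γ) with hE
  have key : ∀ n : ℕ, 1 ≤ n → f ((n : ℝ) * (π / (2 * N))) = E n := by
    intro n hn
    have hnpos : (0:ℝ) < (n:ℝ) := by exact_mod_cast (by omega : 0 < n)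
    rw [hf _ (by positivity)]
    simp only [hE]
    congr 1
    rw [hδ, hc]
    have hxy : (n:ℝ) * (π / (2 * (N:ℝ))) = (n:ℝ) * π / (2 * (N:ℝ)) := by ring
    rw [hxy]
    simp only [div_eq_mul_inv, mul_inv]
    ring
  have hN' : (π/2 : ℝ) = (N:ℝ) * (π / (2 * N)) := by field_simp
  have hm' : (π/4 : ℝ) = (m:ℝ) * (π / (2 * N)) := by
    rw [hmN]; push_cast; field_simp; ring
  rw [hf0, hN', hm', key N (by omega), key m hm1, hN2]
  -- rewrite sums
  have hsum1 : ∑ n ∈ Finset.Ico 1 N, f ((n : ℝ) * (π / (2 * N))) = ∑ n ∈ Finset.Ico 1 N, E n := by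
    refine Finset.sum_congr rfl fun n hn => key n (Finset.mem_Ico.mp hn).1
  have hsum2 : ∑ n ∈ Finset.Ico 1 m, f ((n : ℝ) * (π / (2 * N))) = ∑ n ∈ Finset.Ico 1 m, E n := by
    refine Finset.sum_congr rfl fun n hn => key n (Finset.mem_Ico.mp hn).1
  rw [hsum1, hsum2]
  -- split sums
  have hsplit1 : ∑ n ∈ Finset.Ico 1 N, E n
      = ∑ n ∈ Finset.Ico 1 m, E n + E m + ∑ n ∈ Finset.Ico (m+1) N, E n := by
    rw [← Finset.sum_Ico_consecutive _ (by omega : 1 ≤ m) (by omega : m ≤ N),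
      Finset.sum_eq_sum_Ico_succ_bot (by omega : m < N)]
    ring
  -- RHS split
  have hRHS : ∑ n ∈ Finset.Icc 1 N, θ n * E n
      = (2 * ((k:ℝ) - 1) / (N * M)) * (∑ n ∈ Finset.Ico 1 m, E n)
        + (((M:ℝ) - 1) / (N * M)) * E m
        + (2 * ((k:ℝ) - 1) / (N * (k:ℝ))) * (∑ n ∈ Finset.Ico (m+1) N, E n)
        + (((k:ℝ) - 1) / (N * (k:ℝ))) * E N := by
    rw [← Finset.Ico_add_one_right_eq_Icc, Finset.sum_Ico_succ_top (by omega : 1 ≤ N),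
      ← Finset.sum_Ico_consecutive _ (by omega : 1 ≤ m) (by omega : m ≤ N),
      Finset.sum_eq_sum_Ico_succ_bot (by omega : m < N)]
    rw [Finset.mul_sum, Finset.mul_sum]
    have h1 : ∀ n ∈ Finset.Ico 1 m, θ n * E n = 2 * ((k:ℝ) - 1) / (N * M) * E n := by
      intro n hn
      obtain ⟨h1, h2⟩ := Finset.mem_Ico.mp hn
      rw [hθ, if_neg (by omega), hN2, if_neg (by omega), if_pos h2, hsqrt]
    have h2 : ∀ n ∈ Finset.Ico (m+1) N, θ n * E n = 2 * ((k:ℝ) - 1) / (N * (k:ℝ)) * E n := by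
      intro n hn
      obtain ⟨h1, h2⟩ := Finset.mem_Ico.mp hn
      rw [hθ, if_neg (by omega), hN2, if_neg (by omega), if_neg (by omega), hsqrt]
    rw [Finset.sum_congr rfl h1, Finset.sum_congr rfl h2,
      hθ, if_neg (by omega : ¬ m = N), hN2, if_pos rfl,
      hθ N, if_pos rfl, hsqrt]
    ring
  rw [hsplit1, hRHS, ha₁, ha₂, hsqrt, hMcast]
  have hk1 : (k:ℝ) ≠ 0 := ne_of_gt hkpos
  field_simp
  ring
end

section
/- Let α, μ, γ̄ > 0, let f_{γ̄} be the α-μ SNR density, let ω, ρ, τ > 0, and let 0 < γ_th < ω/ρ. If X is a random variable with density f_{γ̄} and Y = ω·X/(ρ·X + τ) is the impaired SINR, then the outage probability satisfies P(Y ≤ γ_th) = (1/Γ(μ)) · ∫₀^{μ·(τ·γ_th/((ω − ρ·γ_th)·γ̄))^{α/2}} t^{μ−1}·e^{−t} dt. -/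
/-!
For `x > 0` the impaired SINR `ω x / (ρ x + τ)` is at most `γth` exactly when
`x ≤ τ γth / (ω - ρ γth)`, and the α-μ density vanishes on `x ≤ 0`, so the outage probability is
the α-μ distribution function at that point. The substitution `t = μ (x / γ̄)^(α/2)` carries the
α-μ density onto the Gamma(μ, 1) density `t^(μ-1) e^(-t) / Γ(μ)`, which gives the
regularized lower incomplete gamma function.
-/

open Real MeasureTheory intervalIntegral

/-- The α-μ SNR probability density function. -/
noncomputable def alphaMuDensity (α μ γbar γ : ℝ) : ℝ :=
  if γ ≤ 0 then 0
  else (α * μ ^ μ) / (2 * Real.Gamma μ * γbar ^ (α * μ / 2)) * γ ^ (α * μ / 2 - 1) *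
    Real.exp (-μ * (γ / γbar) ^ (α / 2))

open Set

section AlphaMuDensity

variable {α μ γbar : ℝ}

theorem alphaMuDensity_of_nonpos {γ : ℝ} (hγ : γ ≤ 0) : alphaMuDensity α μ γbar γ = 0 :=
  if_pos hγ

theorem alphaMuDensity_nonneg (hα : 0 ≤ α) (hμ : 0 ≤ μ) (hγbar : 0 ≤ γbar) (γ : ℝ) :
    0 ≤ alphaMuDensity α μ γbar γ := by
  unfold alphaMuDensity
  split_ifs with hγ
  · exact le_rfl
  · have := Real.Gamma_nonneg_of_nonneg hμ
    have := (not_le.mp hγ).le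
    positivity

noncomputable def alphaMuToGamma (α μ γbar γ : ℝ) : ℝ := μ * (γ / γbar) ^ (α / 2)

theorem alphaMuToGamma_zero (hα : 0 < α) : alphaMuToGamma α μ γbar 0 = 0 := by
  simp [alphaMuToGamma, Real.zero_rpow (by positivity : α / 2 ≠ 0)]

theorem continuous_alphaMuToGamma (hα : 0 ≤ α) : Continuous (alphaMuToGamma α μ γbar) :=
  continuous_const.mul <| (Real.continuous_rpow_const (by positivity)).comp <|
    continuous_id.div_const γbar

theorem strictMonoOn_alphaMuToGamma (hα : 0 < α) (hμ : 0 < μ) (hγbar : 0 < γbar) :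
    StrictMonoOn (alphaMuToGamma α μ γbar) (Ici 0) := fun x hx y _ hxy =>
  mul_lt_mul_of_pos_left (Real.rpow_lt_rpow (div_nonneg hx hγbar.le)
    (div_lt_div_of_pos_right hxy hγbar) (by positivity)) hμ

theorem image_alphaMuToGamma_Ioc (hα : 0 < α) (hμ : 0 < μ) (hγbar : 0 < γbar) {c : ℝ}
    (hc : 0 ≤ c) : alphaMuToGamma α μ γbar '' Ioc 0 c = Ioc 0 (alphaMuToGamma α μ γbar c) := by
  rw [(continuous_alphaMuToGamma hα.le).continuousOn.image_Ioc_of_strictMonoOn hc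
    ((strictMonoOn_alphaMuToGamma hα hμ hγbar).mono Icc_subset_Ici_self), alphaMuToGamma_zero hα]

theorem hasDerivAt_alphaMuToGamma {x : ℝ} (hx : 0 < x) (hγbar : 0 < γbar) :
    HasDerivAt (alphaMuToGamma α μ γbar)
      (μ * (α / 2) * (x / γbar) ^ (α / 2 - 1) / γbar) x := by
  refine ((((hasDerivAt_id x).div_const γbar).rpow_const
    (p := α / 2) (Or.inl (div_pos hx hγbar).ne')).const_mul μ).congr_deriv ?_
  simp only [id]
  ring

theorem alphaMuDensity_eq_gamma_density_comp {x : ℝ} (hx : 0 < x) (hμ : 0 < μ)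
    (hγbar : 0 < γbar) :
    alphaMuDensity α μ γbar x =
      1 / Real.Gamma μ * (μ * (α / 2) * (x / γbar) ^ (α / 2 - 1) / γbar *
        (alphaMuToGamma α μ γbar x ^ (μ - 1) * exp (-alphaMuToGamma α μ γbar x))) := by
  have hu : 0 < x / γbar := div_pos hx hγbar
  have hΓ : 0 < Real.Gamma μ := Real.Gamma_pos_of_pos hμ
  have hpow : (μ * (x / γbar) ^ (α / 2)) ^ (μ - 1)
      = μ ^ μ / μ * (x / γbar) ^ (α * μ / 2 - α / 2) := by
    rw [Real.mul_rpow hμ.le (by positivity), ← Real.rpow_mul hu.le, Real.rpow_sub_one hμ.ne']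
    ring_nf
  have hx_pow : x ^ (α * μ / 2 - 1) = γbar ^ (α * μ / 2) / γbar * (x / γbar) ^ (α * μ / 2 - 1) := by
    rw [← Real.rpow_sub_one hγbar.ne', ← Real.mul_rpow hγbar.le hu.le, mul_div_cancel₀ _ hγbar.ne']
  have hu_pow : (x / γbar) ^ (α / 2 - 1) * (x / γbar) ^ (α * μ / 2 - α / 2)
      = (x / γbar) ^ (α * μ / 2 - 1) := by
    rw [← Real.rpow_add hu]
    ring_nf
  rw [alphaMuDensity, if_neg hx.not_ge, alphaMuToGamma, hpow, hx_pow, ← hu_pow]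
  field_simp

theorem integral_Ioc_alphaMuDensity (hα : 0 < α) (hμ : 0 < μ) (hγbar : 0 < γbar) {c : ℝ}
    (hc : 0 ≤ c) :
    ∫ γ in Ioc 0 c, alphaMuDensity α μ γbar γ =
      1 / Real.Gamma μ * ∫ t in (0 : ℝ)..alphaMuToGamma α μ γbar c, t ^ (μ - 1) * exp (-t) := by
  have hmono := strictMonoOn_alphaMuToGamma hα hμ hγbar
  have hT : 0 ≤ alphaMuToGamma α μ γbar c := by unfold alphaMuToGamma; positivity
  rw [intervalIntegral.integral_of_le hT, ← image_alphaMuToGamma_Ioc hα hμ hγbar hc,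
    integral_image_eq_integral_abs_deriv_smul measurableSet_Ioc
      (fun x hx => (hasDerivAt_alphaMuToGamma hx.1 hγbar).hasDerivWithinAt)
      (hmono.injOn.mono (Ioc_subset_Ioi_self.trans Ioi_subset_Ici_self)),
    ← MeasureTheory.integral_const_mul]
  refine setIntegral_congr_fun measurableSet_Ioc fun x hx => ?_
  have hx : 0 < x := hx.1
  rw [alphaMuDensity_eq_gamma_density_comp hx hμ hγbar, abs_of_pos (by positivity), smul_eq_mul]

theorem setIntegral_alphaMuDensity_congr_pos {s t : Set ℝ} (hs : MeasurableSet s)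
    (ht : t ⊆ Ioi 0) (hst : ∀ x, 0 < x → (x ∈ s ↔ x ∈ t)) :
    ∫ γ in s, alphaMuDensity α μ γbar γ = ∫ γ in t, alphaMuDensity α μ γbar γ :=
  setIntegral_eq_of_subset_of_forall_sdiff_eq_zero hs (fun x hx => (hst x (ht hx)).2 hx)
    fun x hx => alphaMuDensity_of_nonpos <| not_lt.1 fun hpos => hx.2 ((hst x hpos).1 hx.1)

end AlphaMuDensity

theorem mul_div_mul_add_le_iff_le_div {ω ρ τ γ x : ℝ} (hρ : 0 ≤ ρ) (hτ : 0 < τ)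
    (hγ : ρ * γ < ω) (hx : 0 ≤ x) :
    ω * x / (ρ * x + τ) ≤ γ ↔ x ≤ τ * γ / (ω - ρ * γ) := by
  rw [div_le_iff₀ (by positivity), le_div_iff₀ (sub_pos.2 hγ)]
  constructor <;> intro h <;> linarith

theorem stmt_11_general {Ω : Type*} [MeasurableSpace Ω] (P : Measure Ω)
    (α μ γbar : ℝ) (hα : 0 < α) (hμ : 0 < μ) (hγbar : 0 < γbar)
    (ω ρ τ : ℝ) (hρ : 0 < ρ) (hτ : 0 < τ)
    (γth : ℝ) (hγth0 : 0 < γth) (hγth : γth < ω / ρ)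
    (X : Ω → ℝ)
    (hdens : ∀ s : Set ℝ, MeasurableSet s →
      P (X ⁻¹' s) = ENNReal.ofReal (∫ γ in s, alphaMuDensity α μ γbar γ))
    (Y : Ω → ℝ) (hY : ∀ a, Y a = ω * X a / (ρ * X a + τ)) :
    (P {a | Y a ≤ γth}).toReal =
      (1 / Real.Gamma μ) *
        ∫ t in (0 : ℝ)..(μ * (τ * γth / ((ω - ρ * γth) * γbar)) ^ (α / 2)),
          t ^ (μ - 1) * Real.exp (-t) := by
  have hgap : ρ * γth < ω := (lt_div_iff₀' hρ).1 hγth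
  set S : Set ℝ := {x | ω * x / (ρ * x + τ) ≤ γth}
  have hS : MeasurableSet S := measurableSet_le (by fun_prop) measurable_const
  have hc : 0 ≤ τ * γth / (ω - ρ * γth) := div_nonneg (by positivity) (sub_pos.2 hgap).le
  have hpre : {a | Y a ≤ γth} = X ⁻¹' S := by ext a; simp [S, hY]
  rw [hpre, hdens S hS, setIntegral_alphaMuDensity_congr_pos hS Ioc_subset_Ioi_self
      fun x hx => (mul_div_mul_add_le_iff_le_div hρ.le hτ hgap hx.le).trans (and_iff_right hx).symm,
    ENNReal.toReal_ofReal (setIntegral_nonneg measurableSet_Ioc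
      fun x _ => alphaMuDensity_nonneg hα.le hμ.le hγbar.le x),
    integral_Ioc_alphaMuDensity hα hμ hγbar hc, alphaMuToGamma, div_div]

theorem stmt_11 {Ω : Type*} [MeasurableSpace Ω] (P : Measure Ω) [IsProbabilityMeasure P]
    (α μ γbar : ℝ) (hα : 0 < α) (hμ : 0 < μ) (hγbar : 0 < γbar)
    (ω ρ τ : ℝ) (hω : 0 < ω) (hρ : 0 < ρ) (hτ : 0 < τ)
    (γth : ℝ) (hγth0 : 0 < γth) (hγth : γth < ω / ρ)
    (X : Ω → ℝ) (hX : Measurable X)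
    (hdens : ∀ s : Set ℝ, MeasurableSet s →
      P (X ⁻¹' s) = ENNReal.ofReal (∫ γ in s, alphaMuDensity α μ γbar γ))
    (Y : Ω → ℝ) (hY : ∀ a, Y a = ω * X a / (ρ * X a + τ)) :
    (P {a | Y a ≤ γth}).toReal =
      (1 / Real.Gamma μ) *
        ∫ t in (0 : ℝ)..(μ * (τ * γth / ((ω - ρ * γth) * γbar)) ^ (α / 2)),
          t ^ (μ - 1) * Real.exp (-t) :=
  stmt_11_general P α μ γbar hα hμ hγbar ω ρ τ hρ hτ γth hγth0 hγth X hdens Y hY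
end

section
/- Let α, μ > 0 and γ_th > 0, and for γ̄ > 0 let P_out(γ̄) = ∫₀^{γ_th} f_{γ̄}(γ) dγ denote the ideal outage probability under the α-μ SNR density. Then P_out(γ̄) · γ̄^{αμ/2} tends to (μ^{μ−1}/Γ(μ)) · γ_th^{αμ/2} as γ̄ → ∞; that is, P_out(γ̄) ∼ (μ^{μ−1}/Γ(μ)) · (γ_th/γ̄)^{αμ/2} in the high-SNR regime. -/
open Real MeasureTheory Filter Topology intervalIntegral

/-! The factor `γbar ^ (α * μ / 2)` cancels the normalisation of the density, leaving
`c γ ^ (α μ / 2 - 1) exp (-μ (γ / γbar) ^ (α / 2))` on `(0, γth]`, `c = α μ ^ μ / (2 Γ(μ))`. As `γbar → ∞` the exponential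
factor increases to `1` and is bounded by `1`, so by dominated convergence the integral tends to
`c ∫₀^γth γ ^ (α μ / 2 - 1) dγ = c γth ^ (α μ / 2) / (α μ / 2)`. -/

lemma alphaMuDensity_mul_rpow {α μ γbar γ : ℝ} (hγbar : 0 < γbar) (hγ : 0 < γ) :
    alphaMuDensity α μ γbar γ * γbar ^ (α * μ / 2) =
      α * μ ^ μ / (2 * Gamma μ) * (γ ^ (α * μ / 2 - 1) * exp (-μ * (γ / γbar) ^ (α / 2))) := by
  rw [alphaMuDensity, if_neg hγ.not_ge]
  field_simp

lemma integral_alphaMuDensity_mul_rpow {α μ γbar x : ℝ} (hγbar : 0 < γbar) (hx : 0 ≤ x) :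
    (∫ γ in (0 : ℝ)..x, alphaMuDensity α μ γbar γ) * γbar ^ (α * μ / 2) =
      α * μ ^ μ / (2 * Gamma μ) *
        ∫ γ in (0 : ℝ)..x, γ ^ (α * μ / 2 - 1) * exp (-μ * (γ / γbar) ^ (α / 2)) := by
  rw [← intervalIntegral.integral_mul_const, ← intervalIntegral.integral_const_mul]
  refine integral_congr_ae (Eventually.of_forall fun γ hγ => ?_)
  rw [Set.uIoc_of_le hx] at hγ
  exact alphaMuDensity_mul_rpow hγbar hγ.1

lemma exp_neg_mul_div_rpow_le_one {μ s γ b : ℝ} (hμ : 0 ≤ μ) (hγ : 0 ≤ γ) (hb : 0 ≤ b) :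
    exp (-μ * (γ / b) ^ s) ≤ 1 := by
  rw [exp_le_one_iff, neg_mul]
  exact neg_nonpos.mpr (mul_nonneg hμ (rpow_nonneg (div_nonneg hγ hb) s))

lemma tendsto_exp_neg_mul_div_rpow_atTop {μ s : ℝ} (hs : 0 < s) (γ : ℝ) :
    Tendsto (fun b : ℝ => exp (-μ * (γ / b) ^ s)) atTop (𝓝 1) := by
  have hdiv : Tendsto (fun b : ℝ => γ / b) atTop (𝓝 0) :=
    tendsto_const_nhds.div_atTop tendsto_id
  have hrpow : Tendsto (fun b : ℝ => (γ / b) ^ s) atTop (𝓝 0) := by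
    simpa only [Function.comp_def, zero_rpow hs.ne'] using
      ((continuousAt_rpow_const 0 s (Or.inr hs.le)).tendsto.comp hdiv)
  simpa only [mul_zero, exp_zero] using ((hrpow.const_mul (-μ)).rexp)

lemma tendsto_integral_rpow_mul_exp_neg_mul_div_rpow {μ s r x : ℝ} (hμ : 0 ≤ μ) (hs : 0 < s)
    (hr : -1 < r) (hx : 0 ≤ x) :
    Tendsto (fun b : ℝ => ∫ γ in (0 : ℝ)..x, γ ^ r * exp (-μ * (γ / b) ^ s)) atTop
      (𝓝 (x ^ (r + 1) / (r + 1))) := by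
  have hint : ∫ γ in (0 : ℝ)..x, γ ^ r = x ^ (r + 1) / (r + 1) := by
    rw [integral_rpow (Or.inl hr), zero_rpow (by linarith), sub_zero]
  rw [← hint]
  refine tendsto_integral_filter_of_dominated_convergence (fun γ => γ ^ r)
    (Eventually.of_forall fun b => by fun_prop) ?_ (intervalIntegrable_rpow' hr) ?_
  · filter_upwards [eventually_ge_atTop 0] with b hb
    refine Eventually.of_forall fun γ hγ => ?_
    rw [Set.uIoc_of_le hx] at hγ
    have hγ0 : 0 ≤ γ := hγ.1.le
    rw [norm_mul, norm_of_nonneg (rpow_nonneg hγ0 r), norm_of_nonneg (exp_pos _).le]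
    exact mul_le_of_le_one_right (rpow_nonneg hγ0 r) (exp_neg_mul_div_rpow_le_one hμ hγ0 hb)
  · refine Eventually.of_forall fun γ _ => ?_
    simpa only [mul_one] using (tendsto_exp_neg_mul_div_rpow_atTop hs γ).const_mul (γ ^ r)

theorem stmt_12 (α μ γth : ℝ) (hα : 0 < α) (hμ : 0 < μ) (hγth : 0 < γth)
    (Pout : ℝ → ℝ)
    (hPout : ∀ γbar : ℝ, 0 < γbar →
      Pout γbar = ∫ γ in (0 : ℝ)..γth, alphaMuDensity α μ γbar γ) :
    Tendsto (fun γbar : ℝ => Pout γbar * γbar ^ (α * μ / 2)) atTop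
      (𝓝 ((μ ^ (μ - 1) / Real.Gamma μ) * γth ^ (α * μ / 2))) := by
  have hlim := (tendsto_integral_rpow_mul_exp_neg_mul_div_rpow hμ.le (half_pos hα)
    (by nlinarith : -1 < α * μ / 2 - 1) hγth.le).const_mul (α * μ ^ μ / (2 * Gamma μ))
  have hconst : α * μ ^ μ / (2 * Gamma μ) * (γth ^ (α * μ / 2 - 1 + 1) / (α * μ / 2 - 1 + 1)) =
      μ ^ (μ - 1) / Gamma μ * γth ^ (α * μ / 2) := by
    have hΓ : Gamma μ ≠ 0 := (Gamma_pos_of_pos hμ).ne'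
    rw [sub_add_cancel, rpow_sub hμ, rpow_one]
    field_simp
  rw [hconst] at hlim
  refine hlim.congr' ?_
  filter_upwards [eventually_gt_atTop 0] with γbar hγbar
  rw [hPout γbar hγbar, integral_alphaMuDensity_mul_rpow hγbar hγth.le]
end

section
/- Let α, μ, γ̄ > 0 and let f_{γ̄} be the α-μ SNR density. Then the expected logarithm of the SNR satisfies ∫₀^∞ log(γ) · f_{γ̄}(γ) dγ = log(γ̄) + (2/α)·(ψ(μ) − log(μ)), where ψ is the digamma function (the logarithmic derivative of the Gamma function). -/
open Real MeasureTheory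

/-- The digamma function: the logarithmic derivative of the Gamma function. -/
noncomputable def digamma (x : ℝ) : ℝ := deriv Real.Gamma x / Real.Gamma x

open Set Filter Asymptotics Topology

lemma integrable_log_gamma {μ : ℝ} (hμ : 0 < μ) :
    IntegrableOn (fun t : ℝ => t ^ (μ - 1) * (Real.log t * Real.exp (-t))) (Ioi 0) := by
  have hfc : LocallyIntegrableOn (fun t : ℝ => Real.log t * Real.exp (-t)) (Ioi 0) := by
    refine ContinuousOn.locallyIntegrableOn ?_ measurableSet_Ioi
    exact (Real.continuousOn_log.mono (fun x hx => ne_of_gt hx)).mul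
      (Real.continuous_exp.comp continuous_neg).continuousOn
  have hexp_top : (fun t : ℝ => Real.exp (-t)) =O[atTop] (· ^ (-(μ + 2))) := by
    simpa only [neg_one_mul] using (isLittleO_exp_neg_mul_rpow_atTop zero_lt_one _).isBigO
  have hf_top : (fun t : ℝ => Real.log t * Real.exp (-t)) =O[atTop] (· ^ (-(μ + 1))) := by
    have := isBigO_rpow_top_log_smul (E := ℝ) (by linarith : μ + 1 < μ + 2) hexp_top
    simpa [smul_eq_mul] using this
  have hexp_bot : (fun t : ℝ => Real.exp (-t)) =O[𝓝[>] (0:ℝ)] (· ^ (-(0:ℝ))) := by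
    simp_rw [neg_zero, Real.rpow_zero]
    refine isBigO_const_of_tendsto (?_ : Tendsto _ _ (𝓝 (Real.exp 0))) (by simp)
    exact ((Real.continuous_exp.comp continuous_neg).tendsto' 0 _ (by simp)).mono_left
      nhdsWithin_le_nhds
  have hf_bot : (fun t : ℝ => Real.log t * Real.exp (-t)) =O[𝓝[>] (0:ℝ)] (· ^ (-(μ/2))) := by
    have := isBigO_rpow_zero_log_smul (E := ℝ) (by linarith : (0:ℝ) < μ/2) hexp_bot
    simpa [smul_eq_mul] using this
  exact mellin_convergent_of_isBigO_scalar hfc hf_top (by linarith) hf_bot (by linarith)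

lemma deriv_Gamma_eq {μ : ℝ} (hμ : 0 < μ) :
    deriv Real.Gamma μ = ∫ t in Ioi (0:ℝ), t ^ (μ - 1) * (Real.log t * Real.exp (-t)) := by
  have hre : (0:ℝ) < (μ : ℂ).re := by simpa using hμ
  have h1 := Complex.hasDerivAt_GammaIntegral hre
  have hev : Complex.Gamma =ᶠ[nhds (μ:ℂ)] Complex.GammaIntegral := by
    have hopen : IsOpen {s : ℂ | 0 < s.re} := isOpen_lt continuous_const Complex.continuous_re
    filter_upwards [hopen.mem_nhds hre] with s hs
    exact Complex.Gamma_eq_integral hs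
  have h2 : HasDerivAt Complex.Gamma
      (∫ t : ℝ in Ioi 0, (t:ℂ) ^ ((μ:ℂ) - 1) * (Real.log t * Real.exp (-t))) (μ:ℂ) :=
    h1.congr_of_eventuallyEq hev
  have h3 := h2.real_of_complex
  have hI : (∫ t : ℝ in Ioi 0, (t:ℂ) ^ ((μ:ℂ) - 1) * (Real.log t * Real.exp (-t))) =
      ((∫ t : ℝ in Ioi 0, t ^ (μ - 1) * (Real.log t * Real.exp (-t)) : ℝ) : ℂ) := by
    rw [show ((∫ t : ℝ in Ioi (0:ℝ), t ^ (μ - 1) * (Real.log t * Real.exp (-t)) : ℝ) : ℂ) =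
        ∫ t : ℝ in Ioi (0:ℝ), ((t ^ (μ - 1) * (Real.log t * Real.exp (-t)) : ℝ) : ℂ) from
      (integral_ofReal).symm]
    refine setIntegral_congr_fun measurableSet_Ioi (fun t ht => ?_)
    have : ((t : ℂ) ^ ((μ:ℂ) - 1)) = ((t ^ (μ - 1) : ℝ) : ℂ) := by
      rw [Complex.ofReal_cpow (le_of_lt ht)]
      push_cast
      ring_nf
    rw [this]
    push_cast
    ring
  have hfun : (fun x : ℝ => (Complex.Gamma x).re) = Real.Gamma := by
    funext x
    rw [Complex.Gamma_ofReal, Complex.ofReal_re]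
  rw [hI] at h3
  rw [← hfun]
  have h4 : HasDerivAt (fun x : ℝ => (Complex.Gamma x).re)
      (∫ t : ℝ in Ioi 0, t ^ (μ - 1) * (Real.log t * Real.exp (-t))) μ := by
    simpa using h3
  exact h4.deriv

theorem stmt_14 (α μ γbar : ℝ) (hα : 0 < α) (hμ : 0 < μ) (hγbar : 0 < γbar) :
    ∫ γ in Set.Ioi (0 : ℝ), Real.log γ * alphaMuDensity α μ γbar γ =
      Real.log γbar + (2 / α) * (digamma μ - Real.log μ) := by
  have hΓ : 0 < Real.Gamma μ := Real.Gamma_pos_of_pos hμ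
  have hγb : (0:ℝ) < γbar ^ (α * μ / 2) := Real.rpow_pos_of_pos hγbar _
  set C : ℝ := α * μ ^ μ / (2 * Real.Gamma μ * γbar ^ (α * μ / 2)) with hC
  set F : ℝ → ℝ := fun γ =>
    Real.log γ * (C * γ ^ (α * μ / 2 - 1) * Real.exp (-μ * (γ / γbar) ^ (α / 2))) with hF
  set g : ℝ → ℝ := fun y => (μ ^ μ / Real.Gamma μ) *
    ((Real.log γbar + (2 / α) * Real.log y) * (y ^ (μ - 1) * Real.exp (-(μ * y)))) with hg
  have h0 : ∫ γ in Set.Ioi (0:ℝ), Real.log γ * alphaMuDensity α μ γbar γ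
      = ∫ γ in Set.Ioi (0:ℝ), F γ := by
    refine setIntegral_congr_fun measurableSet_Ioi fun γ hγ => ?_
    rw [alphaMuDensity, if_neg (not_le.mpr hγ)]
  have h1 : (∫ γ in Set.Ioi (0:ℝ), F γ) = γbar * ∫ x in Set.Ioi (0:ℝ), F (γbar * x) := by
    have h := integral_comp_mul_left_Ioi F 0 hγbar
    simp only [mul_zero, smul_eq_mul] at h
    rw [h, ← mul_assoc, mul_inv_cancel₀ hγbar.ne', one_mul]
  have key2 : ∀ x ∈ Set.Ioi (0:ℝ),
      γbar * F (γbar * x) = (α / 2 * x ^ (α / 2 - 1)) • g (x ^ (α / 2)) := by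
    intro x hx
    have hx0 : (0:ℝ) < x := hx
    have e1 : (γbar * x) / γbar = x := by field_simp
    have e2 : (γbar * x) ^ (α * μ / 2 - 1)
        = γbar ^ (α * μ / 2 - 1) * x ^ (α * μ / 2 - 1) :=
      Real.mul_rpow hγbar.le hx0.le
    have e3 : Real.log (γbar * x) = Real.log γbar + Real.log x :=
      Real.log_mul hγbar.ne' hx0.ne'
    have e4 : Real.log (x ^ (α / 2)) = (α / 2) * Real.log x := Real.log_rpow hx0 _
    have e5 : (x ^ (α / 2)) ^ (μ - 1) = x ^ (α / 2 * (μ - 1)) :=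
      (Real.rpow_mul hx0.le _ _).symm
    have e6 : γbar ^ (α * μ / 2 - 1) * γbar = γbar ^ (α * μ / 2) := by
      rw [← Real.rpow_add_one hγbar.ne']
      ring_nf
    have e7 : x ^ (α * μ / 2 - 1) = x ^ (α / 2 - 1) * x ^ (α / 2 * (μ - 1)) := by
      rw [← Real.rpow_add hx0]
      ring_nf
    have e8 : Real.log γbar + (2 / α) * ((α / 2) * Real.log x)
        = Real.log γbar + Real.log x := by
      field_simp
    have c1 : C * γbar ^ (α * μ / 2 - 1) * γbar = α * μ ^ μ / (2 * Real.Gamma μ) := by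
      rw [hC, mul_assoc, e6]
      field_simp
    calc γbar * F (γbar * x)
        = (Real.log γbar + Real.log x) * ((C * γbar ^ (α * μ / 2 - 1) * γbar) *
            (x ^ (α * μ / 2 - 1) * Real.exp (-(μ * x ^ (α / 2))))) := by
          rw [hF]; simp only [e1, e2, e3, neg_mul]; ring
      _ = (Real.log γbar + Real.log x) * (α * μ ^ μ / (2 * Real.Gamma μ) *
            ((x ^ (α / 2 - 1) * x ^ (α / 2 * (μ - 1))) *
              Real.exp (-(μ * x ^ (α / 2))))) := by rw [c1, ← e7]
      _ = (α / 2 * x ^ (α / 2 - 1)) • g (x ^ (α / 2)) := by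
          rw [hg]; simp only [smul_eq_mul, e4, e5]
          rw [← mul_assoc (2/α) (α/2), show (2/α) * (α/2) = 1 by field_simp, one_mul]
          field_simp
  have h2 : (∫ x in Set.Ioi (0:ℝ), γbar * F (γbar * x)) = ∫ y in Set.Ioi (0:ℝ), g y := by
    rw [setIntegral_congr_fun measurableSet_Ioi key2]
    exact integral_comp_rpow_Ioi_of_pos (half_pos hα)
  have h3 : (∫ y in Set.Ioi (0:ℝ), g y) = μ⁻¹ * ∫ t in Set.Ioi (0:ℝ), g (μ⁻¹ * t) := by
    have h := integral_comp_mul_left_Ioi g 0 (inv_pos.mpr hμ)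
    simp only [mul_zero, inv_inv, smul_eq_mul] at h
    rw [h, ← mul_assoc, inv_mul_cancel₀ hμ.ne', one_mul]
  have key4 : ∀ t ∈ Set.Ioi (0:ℝ), μ⁻¹ * g (μ⁻¹ * t)
      = (Real.Gamma μ)⁻¹ * ((Real.log γbar - (2 / α) * Real.log μ) *
          (Real.exp (-t) * t ^ (μ - 1))
        + (2 / α) * (t ^ (μ - 1) * (Real.log t * Real.exp (-t)))) := by
    intro t ht
    have ht0 : (0:ℝ) < t := ht
    have e1 : Real.log (μ⁻¹ * t) = -Real.log μ + Real.log t := by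
      rw [Real.log_mul (inv_ne_zero hμ.ne') ht0.ne', Real.log_inv]
    have e2 : (μ⁻¹ * t) ^ (μ - 1) = μ⁻¹ ^ (μ - 1) * t ^ (μ - 1) :=
      Real.mul_rpow (inv_pos.mpr hμ).le ht0.le
    have hμμ : (0:ℝ) < μ ^ μ := Real.rpow_pos_of_pos hμ _
    have e3 : μ⁻¹ ^ (μ - 1) = μ / μ ^ μ := by
      rw [Real.inv_rpow hμ.le, ← Real.rpow_neg hμ.le, eq_div_iff hμμ.ne',
        ← Real.rpow_add hμ, show -(μ - 1) + μ = 1 by ring, Real.rpow_one]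
    have e4 : μ * (μ⁻¹ * t) = t := by field_simp
    rw [hg]
    simp only [e1, e2, e3, e4]
    field_simp
    ring
  have hint1 : IntegrableOn (fun t : ℝ => Real.exp (-t) * t ^ (μ - 1)) (Set.Ioi 0) :=
    Real.GammaIntegral_convergent hμ
  have hint2 := integrable_log_gamma hμ
  have h4 : (∫ t in Set.Ioi (0:ℝ), μ⁻¹ * g (μ⁻¹ * t))
      = (Real.Gamma μ)⁻¹ * ((Real.log γbar - (2 / α) * Real.log μ) * Real.Gamma μ
        + (2 / α) * deriv Real.Gamma μ) := by
    rw [setIntegral_congr_fun measurableSet_Ioi key4]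
    rw [MeasureTheory.integral_const_mul, integral_add ((hint1.const_mul _)) (hint2.const_mul _),
      MeasureTheory.integral_const_mul, MeasureTheory.integral_const_mul,
      ← Real.Gamma_eq_integral hμ, ← deriv_Gamma_eq hμ]
  rw [h0, h1, ← MeasureTheory.integral_const_mul, h2, h3, ← MeasureTheory.integral_const_mul,
    h4, digamma]
  field_simp
  ring
end

section
/- Let α, μ > 0 and for γ̄ > 0 let C(γ̄) = ∫₀^∞ log(1 + γ) · f_{γ̄}(γ) dγ denote the (natural-log) ergodic channel capacity under the α-μ SNR density with ideal RF front ends. Then C(γ̄) − log(γ̄) tends to (2/α)·(ψ(μ) − log(μ)) as γ̄ → ∞, where ψ is the digamma function; equivalently, the capacity in bits satisfies the high-SNR asymptote C(γ̄)/log 2 ∼ [ (2/α)·ψ(μ) − log(μ^{2/α}/γ̄) ] / log 2. -/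
open Real MeasureTheory Filter Topology

open Set



lemma contOn_rpow (c : ℝ) : ContinuousOn (fun s : ℝ => s ^ c) (Ioi 0) :=
  fun x hx => (Real.continuousAt_rpow_const x c (Or.inl (ne_of_gt hx))).continuousWithinAt

lemma contOn_log' : ContinuousOn Real.log (Ioi (0:ℝ)) :=
  fun x hx => (Real.continuousAt_log (ne_of_gt hx)).continuousWithinAt

/-- |log| against the Gamma integrand is integrable. -/
lemma abslog_gammaIntegrand_integrable {μ : ℝ} (hμ : 0 < μ) :
    IntegrableOn (fun s : ℝ => |Real.log s| * (s ^ (μ - 1) * Real.exp (-s))) (Ioi 0) := by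
  have hbound : IntegrableOn
      (fun s : ℝ => (2 / μ) * (Real.exp (-s) * s ^ (μ / 2 - 1))
        + Real.exp (-s) * s ^ ((μ + 1) - 1)) (Ioi 0) := by
    exact ((Real.GammaIntegral_convergent (by linarith)).const_mul _).add
      (Real.GammaIntegral_convergent (by linarith))
  refine hbound.integrable.mono' ?_ ?_
  · refine ContinuousOn.aestronglyMeasurable ?_ measurableSet_Ioi
    exact (contOn_log'.abs.mul ((contOn_rpow _).mul
      (Real.continuous_exp.comp continuous_neg).continuousOn))
  · rw [ae_restrict_iff' measurableSet_Ioi]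
    filter_upwards with s hs
    have hs0 : (0 : ℝ) < s := hs
    have hexp : (0:ℝ) < Real.exp (-s) := Real.exp_pos _
    have hrp : (0:ℝ) < s ^ (μ - 1) := Real.rpow_pos_of_pos hs0 _
    rw [Real.norm_eq_abs, abs_of_nonneg (by positivity)]
    rcases le_total s 1 with h1 | h1
    · have hlog : |Real.log s| ≤ (2 / μ) * s ^ (-(μ / 2)) := by
        have hls : Real.log s ≤ 0 := Real.log_nonpos hs0.le h1
        rw [abs_of_nonpos hls]
        have h2 : Real.log (s ^ (-(μ / 2))) ≤ s ^ (-(μ / 2)) := by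
          have := Real.log_le_sub_one_of_pos (Real.rpow_pos_of_pos hs0 (-(μ / 2)))
          linarith
        rw [Real.log_rpow hs0] at h2
        have : -Real.log s ≤ (2 / μ) * s ^ (-(μ / 2)) := by
          have hμ' : (0:ℝ) < 2 / μ := by positivity
          calc -Real.log s = (2 / μ) * (-(μ / 2) * Real.log s) := by field_simp
            _ ≤ (2 / μ) * s ^ (-(μ / 2)) := by
                exact mul_le_mul_of_nonneg_left h2 hμ'.le
        exact this
      have key : |Real.log s| * (s ^ (μ - 1) * Real.exp (-s))
          ≤ (2 / μ) * (Real.exp (-s) * s ^ (μ / 2 - 1)) := by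
        have := mul_le_mul_of_nonneg_right hlog (by positivity :
          (0:ℝ) ≤ s ^ (μ - 1) * Real.exp (-s))
        calc |Real.log s| * (s ^ (μ - 1) * Real.exp (-s))
            ≤ (2 / μ) * s ^ (-(μ / 2)) * (s ^ (μ - 1) * Real.exp (-s)) := this
          _ = (2 / μ) * (Real.exp (-s) * (s ^ (-(μ / 2)) * s ^ (μ - 1))) := by ring
          _ = (2 / μ) * (Real.exp (-s) * s ^ (μ / 2 - 1)) := by
              rw [← Real.rpow_add hs0]; ring_nf
      have : (0:ℝ) ≤ Real.exp (-s) * s ^ ((μ + 1) - 1) := by positivity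
      linarith
    · have hls : 0 ≤ Real.log s := Real.log_nonneg h1
      have hlog : |Real.log s| ≤ s := by
        rw [abs_of_nonneg hls]
        have := Real.log_le_sub_one_of_pos hs0
        linarith
      have key : |Real.log s| * (s ^ (μ - 1) * Real.exp (-s))
          ≤ Real.exp (-s) * s ^ ((μ + 1) - 1) := by
        calc |Real.log s| * (s ^ (μ - 1) * Real.exp (-s))
            ≤ s * (s ^ (μ - 1) * Real.exp (-s)) := by
              exact mul_le_mul_of_nonneg_right hlog (by positivity)
          _ = Real.exp (-s) * (s ^ (1:ℝ) * s ^ (μ - 1)) := by rw [Real.rpow_one]; ring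
          _ = Real.exp (-s) * s ^ ((μ + 1) - 1) := by
              rw [← Real.rpow_add hs0]; ring_nf
      have : (0:ℝ) ≤ (2 / μ) * (Real.exp (-s) * s ^ (μ / 2 - 1)) := by positivity
      linarith

lemma log_gammaIntegrand_integrable {μ : ℝ} (hμ : 0 < μ) :
    IntegrableOn (fun s : ℝ => Real.log s * (s ^ (μ - 1) * Real.exp (-s))) (Ioi 0) := by
  refine (abslog_gammaIntegrand_integrable hμ).integrable.mono' ?_ ?_
  · refine ContinuousOn.aestronglyMeasurable ?_ measurableSet_Ioi
    exact (contOn_log'.mul ((contOn_rpow _).mul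
      (Real.continuous_exp.comp continuous_neg).continuousOn))
  · rw [ae_restrict_iff' measurableSet_Ioi]
    filter_upwards with s hs
    have hs0 : (0:ℝ) < s := hs
    rw [Real.norm_eq_abs, abs_mul, abs_of_nonneg (by positivity : (0:ℝ) ≤ s ^ (μ - 1) * Real.exp (-s))]


lemma hasDerivAt_realGamma {μ : ℝ} (hμ : 0 < μ) :
    HasDerivAt Real.Gamma (∫ s in Ioi (0:ℝ), Real.log s * (s ^ (μ - 1) * Real.exp (-s))) μ := by
  have hs : 0 < (μ : ℂ).re := by simpa using hμ
  have h1 := Complex.hasDerivAt_GammaIntegral hs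
  have hD : (∫ t in Ioi (0:ℝ), (t:ℂ) ^ ((μ:ℂ) - 1) * ((Real.log t : ℂ) * (Real.exp (-t) : ℂ)))
      = ((∫ s in Ioi (0:ℝ), Real.log s * (s ^ (μ - 1) * Real.exp (-s)) : ℝ) : ℂ) := by
    have hcoe : ∀ r : ℝ, Complex.ofReal r = @RCLike.ofReal ℂ _ r := fun r => rfl
    conv_rhs => rw [hcoe, ← _root_.integral_ofReal]
    refine setIntegral_congr_fun measurableSet_Ioi fun t ht => ?_
    have h2 : ((t ^ (μ - 1) : ℝ) : ℂ) = (t:ℂ) ^ ((μ:ℂ) - 1) := by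
      rw [Complex.ofReal_cpow (le_of_lt ht)]
      push_cast
      ring_nf
    rw [← hcoe]
    push_cast [Complex.ofReal_cpow (le_of_lt ht)]
    ring
  rw [hD] at h1
  have h3 : HasDerivAt (fun x : ℝ => (Complex.GammaIntegral x).re)
      ((((∫ s in Ioi (0:ℝ), Real.log s * (s ^ (μ - 1) * Real.exp (-s)) : ℝ)) : ℂ)).re μ :=
    h1.real_of_complex
  rw [Complex.ofReal_re] at h3
  refine h3.congr_of_eventuallyEq ?_
  filter_upwards [Ioi_mem_nhds hμ] with x hx
  rw [Real.Gamma_eq_integral hx, Complex.GammaIntegral_ofReal, Complex.ofReal_re]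


/-- S1 -/
lemma integrable_S1 {μ : ℝ} (hμ : 0 < μ) :
    IntegrableOn (fun y : ℝ => y ^ (μ - 1) * Real.exp (-(μ * y))) (Ioi 0) := by
  have base : IntegrableOn (fun s : ℝ => s ^ (μ - 1) * Real.exp (-s)) (Ioi 0) := by
    refine (Real.GammaIntegral_convergent hμ).congr_fun (fun x hx => ?_) measurableSet_Ioi
    ring
  have h1 : IntegrableOn (fun x : ℝ => (μ * x) ^ (μ - 1) * Real.exp (-(μ * x))) (Ioi 0) := by
    have := (integrableOn_Ioi_comp_mul_left_iff
      (fun s : ℝ => s ^ (μ - 1) * Real.exp (-s)) 0 hμ).mpr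
    rw [mul_zero] at this
    exact this base
  refine IntegrableOn.congr_fun (h1.const_mul ((μ ^ (μ - 1) : ℝ)⁻¹)) (fun x hx => ?_) measurableSet_Ioi
  have hx0 : (0:ℝ) < x := hx
  rw [Real.mul_rpow hμ.le hx0.le]
  field_simp

/-- S2 -/
lemma integrable_S2 {μ : ℝ} (hμ : 0 < μ) :
    IntegrableOn (fun y : ℝ => |Real.log y| * (y ^ (μ - 1) * Real.exp (-(μ * y)))) (Ioi 0) := by
  have basef : IntegrableOn
      (fun s : ℝ => (|Real.log s| + |Real.log μ|) * (s ^ (μ - 1) * Real.exp (-s))) (Ioi 0) := by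
    have h2 := (abslog_gammaIntegrand_integrable hμ).add
      ((Real.GammaIntegral_convergent hμ).const_mul (|Real.log μ|))
    refine IntegrableOn.congr_fun h2 (fun x hx => ?_) measurableSet_Ioi
    simp only [Pi.add_apply]
    ring
  have h1 : IntegrableOn
      (fun x : ℝ => (|Real.log (μ * x)| + |Real.log μ|) * ((μ * x) ^ (μ - 1) * Real.exp (-(μ * x))))
      (Ioi 0) := by
    have := (integrableOn_Ioi_comp_mul_left_iff
      (fun s : ℝ => (|Real.log s| + |Real.log μ|) * (s ^ (μ - 1) * Real.exp (-s))) 0 hμ).mpr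
    rw [mul_zero] at this
    exact this basef
  refine Integrable.mono' (h1.const_mul ((μ ^ (μ - 1) : ℝ)⁻¹)) ?_ ?_
  · refine ContinuousOn.aestronglyMeasurable ?_ measurableSet_Ioi
    exact contOn_log'.abs.mul ((contOn_rpow _).mul
      ((Real.continuous_exp.comp (continuous_const.mul continuous_id).neg).continuousOn))
  · rw [ae_restrict_iff' measurableSet_Ioi]
    filter_upwards with x hx
    have hx0 : (0:ℝ) < x := hx
    have hxr : (μ * x) ^ (μ - 1) = μ ^ (μ - 1) * x ^ (μ - 1) := Real.mul_rpow hμ.le hx0.le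
    have hlog : |Real.log x| ≤ |Real.log (μ * x)| + |Real.log μ| := by
      have : Real.log x = Real.log (μ * x) - Real.log μ := by
        rw [Real.log_mul (ne_of_gt hμ) (ne_of_gt hx0)]; ring
      rw [this]
      exact abs_sub _ _
    rw [Real.norm_eq_abs, abs_of_nonneg (by positivity)]
    calc |Real.log x| * (x ^ (μ - 1) * Real.exp (-(μ * x)))
        ≤ (|Real.log (μ * x)| + |Real.log μ|) * (x ^ (μ - 1) * Real.exp (-(μ * x))) :=
          mul_le_mul_of_nonneg_right hlog (by positivity)
      _ = (μ ^ (μ - 1) : ℝ)⁻¹ * ((|Real.log (μ * x)| + |Real.log μ|) *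
            ((μ * x) ^ (μ - 1) * Real.exp (-(μ * x)))) := by
          rw [hxr]
          have : (0:ℝ) < μ ^ (μ - 1) := Real.rpow_pos_of_pos hμ _
          field_simp

/-- P1 -/
lemma integrable_P1 {p μ : ℝ} (hp : 0 < p) (hμ : 0 < μ) :
    IntegrableOn (fun t : ℝ => t ^ (p * μ - 1) * Real.exp (-(μ * t ^ p))) (Ioi 0) := by
  have h1 := (integrableOn_Ioi_comp_rpow_iff
    (fun y : ℝ => y ^ (μ - 1) * Real.exp (-(μ * y))) (ne_of_gt hp)).mpr (integrable_S1 hμ)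
  refine IntegrableOn.congr_fun (h1.const_mul (p⁻¹)) (fun x hx => ?_) measurableSet_Ioi
  have hx0 : (0:ℝ) < x := hx
  have hxp : (x ^ p) ^ (μ - 1) = x ^ (p * (μ - 1)) := by
    rw [← Real.rpow_mul hx0.le]
  simp only [smul_eq_mul, abs_of_pos hp, hxp]
  have hadd : x ^ (p - 1) * x ^ (p * (μ - 1)) = x ^ (p * μ - 1) := by
    rw [← Real.rpow_add hx0]; ring_nf
  rw [← hadd]
  field_simp

/-- P2 -/
lemma integrable_P2 {p μ : ℝ} (hp : 0 < p) (hμ : 0 < μ) :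
    IntegrableOn (fun t : ℝ => |Real.log t| * (t ^ (p * μ - 1) * Real.exp (-(μ * t ^ p))))
      (Ioi 0) := by
  have h1 := (integrableOn_Ioi_comp_rpow_iff
    (fun y : ℝ => |Real.log y| * (y ^ (μ - 1) * Real.exp (-(μ * y)))) (ne_of_gt hp)).mpr
    (integrable_S2 hμ)
  refine IntegrableOn.congr_fun (h1.const_mul ((p * p)⁻¹)) (fun x hx => ?_) measurableSet_Ioi
  have hx0 : (0:ℝ) < x := hx
  have hxp : (x ^ p) ^ (μ - 1) = x ^ (p * (μ - 1)) := by
    rw [← Real.rpow_mul hx0.le]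
  have hlxp : |Real.log (x ^ p)| = p * |Real.log x| := by
    rw [Real.log_rpow hx0, abs_mul, abs_of_pos hp]
  simp only [smul_eq_mul, abs_of_pos hp, hxp, hlxp]
  have hadd : x ^ (p - 1) * x ^ (p * (μ - 1)) = x ^ (p * μ - 1) := by
    rw [← Real.rpow_add hx0]; ring_nf
  rw [← hadd]
  field_simp


lemma gammaIntegrand_integrable {μ : ℝ} (hμ : 0 < μ) :
    IntegrableOn (fun s : ℝ => s ^ (μ - 1) * Real.exp (-s)) (Ioi 0) :=
  IntegrableOn.congr_fun (Real.GammaIntegral_convergent hμ) (fun x _ => by ring) measurableSet_Ioi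

lemma integral_gammaIntegrand {μ : ℝ} (hμ : 0 < μ) :
    ∫ s in Ioi (0:ℝ), s ^ (μ - 1) * Real.exp (-s) = Real.Gamma μ := by
  rw [Real.Gamma_eq_integral hμ]
  exact setIntegral_congr_fun measurableSet_Ioi (fun x _ => by ring)

lemma rpow_mul_key {μ : ℝ} (hμ : 0 < μ) : μ⁻¹ * (μ⁻¹) ^ (μ - 1) = μ ^ (-μ) := by
  have h2 : μ ^ μ = μ ^ (μ - 1) * μ := by simpa using Real.rpow_add_one (ne_of_gt hμ) (μ - 1)
  rw [Real.inv_rpow hμ.le, Real.rpow_neg hμ.le, h2, mul_inv]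
  ring

lemma gamma_scaled_int {μ : ℝ} (hμ : 0 < μ) :
    ∫ y in Ioi (0:ℝ), y ^ (μ - 1) * Real.exp (-(μ * y)) = μ ^ (-μ) * Real.Gamma μ := by
  rw [Real.integral_rpow_mul_exp_neg_mul_Ioi hμ hμ, one_div, Real.inv_rpow hμ.le,
    ← Real.rpow_neg hμ.le]

lemma log_gamma_scaled_int {μ : ℝ} (hμ : 0 < μ) :
    ∫ y in Ioi (0:ℝ), Real.log y * (y ^ (μ - 1) * Real.exp (-(μ * y)))
      = μ ^ (-μ) * (deriv Real.Gamma μ - Real.log μ * Real.Gamma μ) := by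
  have h := integral_comp_mul_left_Ioi
    (fun s : ℝ => Real.log (μ⁻¹ * s) * ((μ⁻¹ * s) ^ (μ - 1) * Real.exp (-s))) 0 hμ
  simp only [inv_mul_cancel_left₀ (ne_of_gt hμ), mul_zero] at h
  rw [h]
  have hsplit : ∫ s in Ioi (0:ℝ), Real.log (μ⁻¹ * s) * ((μ⁻¹ * s) ^ (μ - 1) * Real.exp (-s))
      = (μ⁻¹) ^ (μ - 1) * (∫ s in Ioi (0:ℝ), Real.log s * (s ^ (μ - 1) * Real.exp (-s)))
        + ((μ⁻¹) ^ (μ - 1) * Real.log μ⁻¹) * (∫ s in Ioi (0:ℝ), s ^ (μ - 1) * Real.exp (-s)) := by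
    rw [← integral_const_mul, ← integral_const_mul, ← integral_add
      (((log_gammaIntegrand_integrable hμ)).const_mul _)
      ((gammaIntegrand_integrable hμ).const_mul _)]
    refine setIntegral_congr_fun measurableSet_Ioi fun s hs => ?_
    have hs0 : (0:ℝ) < s := hs
    rw [Real.log_mul (inv_ne_zero (ne_of_gt hμ)) (ne_of_gt hs0),
      Real.mul_rpow (inv_nonneg.mpr hμ.le) hs0.le]
    ring
  have hD : (∫ s in Ioi (0:ℝ), Real.log s * (s ^ (μ - 1) * Real.exp (-s)))
      = deriv Real.Gamma μ := ((hasDerivAt_realGamma hμ).deriv).symm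
  have key := rpow_mul_key hμ
  rw [hsplit, integral_gammaIntegrand hμ, hD, smul_eq_mul, Real.log_inv]
  linear_combination (deriv Real.Gamma μ - Real.log μ * Real.Gamma μ) * key

lemma rpow_level_int {p μ : ℝ} (hp : 0 < p) (hμ : 0 < μ) :
    ∫ t in Ioi (0:ℝ), t ^ (p * μ - 1) * Real.exp (-(μ * t ^ p))
      = p⁻¹ * ∫ y in Ioi (0:ℝ), y ^ (μ - 1) * Real.exp (-(μ * y)) := by
  have h := integral_comp_rpow_Ioi_of_pos
    (g := fun y : ℝ => p⁻¹ • (y ^ (μ - 1) * Real.exp (-(μ * y)))) hp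
  rw [integral_smul, smul_eq_mul] at h
  rw [← h]
  refine setIntegral_congr_fun measurableSet_Ioi fun x hx => ?_
  have hx0 : (0:ℝ) < x := hx
  have hxp : (x ^ p) ^ (μ - 1) = x ^ (p * (μ - 1)) := by rw [← Real.rpow_mul hx0.le]
  have hadd : x ^ (p - 1) * x ^ (p * (μ - 1)) = x ^ (p * μ - 1) := by
    rw [← Real.rpow_add hx0]; ring_nf
  simp only [smul_eq_mul, hxp]
  rw [← hadd]
  field_simp

lemma log_rpow_level_int {p μ : ℝ} (hp : 0 < p) (hμ : 0 < μ) :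
    ∫ t in Ioi (0:ℝ), Real.log t * (t ^ (p * μ - 1) * Real.exp (-(μ * t ^ p)))
      = p⁻¹ * p⁻¹ * ∫ y in Ioi (0:ℝ), Real.log y * (y ^ (μ - 1) * Real.exp (-(μ * y))) := by
  have h := integral_comp_rpow_Ioi_of_pos
    (g := fun y : ℝ => (p⁻¹ * p⁻¹) • (Real.log y * (y ^ (μ - 1) * Real.exp (-(μ * y))))) hp
  rw [integral_smul, smul_eq_mul] at h
  rw [← h]
  refine setIntegral_congr_fun measurableSet_Ioi fun x hx => ?_
  have hx0 : (0:ℝ) < x := hx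
  have hxp : (x ^ p) ^ (μ - 1) = x ^ (p * (μ - 1)) := by rw [← Real.rpow_mul hx0.le]
  have hlxp : Real.log (x ^ p) = p * Real.log x := Real.log_rpow hx0 p
  have hadd : x ^ (p - 1) * x ^ (p * (μ - 1)) = x ^ (p * μ - 1) := by
    rw [← Real.rpow_add hx0]; ring_nf
  simp only [smul_eq_mul, hxp, hlxp]
  rw [← hadd]
  field_simp


lemma inv_rpow_key {b c : ℝ} (hb : 0 < b) : b⁻¹ * (b⁻¹) ^ (c - 1) = (b ^ c)⁻¹ := by
  have h2 : b ^ c = b ^ (c - 1) * b := by simpa using Real.rpow_add_one (ne_of_gt hb) (c - 1)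
  rw [Real.inv_rpow hb.le, h2, mul_inv]
  ring

lemma density_scale {α μ : ℝ} {γbar γ : ℝ} (hb : 0 < γbar) (hγ : 0 < γ) :
    alphaMuDensity α μ γbar γ = γbar⁻¹ * alphaMuDensity α μ 1 (γbar⁻¹ * γ) := by
  have h1 : 0 < γbar⁻¹ * γ := by positivity
  unfold alphaMuDensity
  rw [if_neg (not_le.mpr hγ), if_neg (not_le.mpr h1)]
  simp only [Real.one_rpow, div_one, mul_one]
  rw [Real.mul_rpow (inv_nonneg.mpr hb.le) hγ.le]
  have hkey : γbar⁻¹ * (γbar⁻¹) ^ (α * μ / 2 - 1) = (γbar ^ (α * μ / 2))⁻¹ := inv_rpow_key hb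
  have harg : γ / γbar = γbar⁻¹ * γ := by rw [div_eq_inv_mul]
  rw [harg]
  linear_combination (-(α * μ ^ μ) / (2 * Real.Gamma μ) * γ ^ (α * μ / 2 - 1) *
    Real.exp (-μ * (γbar⁻¹ * γ) ^ (α / 2))) * hkey

lemma abs_log_add_le {ε u : ℝ} (hε0 : 0 < ε) (hε1 : ε ≤ 1) (hu : 0 < u) :
    |Real.log (ε + u)| ≤ Real.log 2 + |Real.log u| := by
  have h2 : (0:ℝ) < ε + u := by linarith
  rw [abs_le]
  constructor
  · have hl : Real.log u ≤ Real.log (ε + u) := Real.log_le_log hu (by linarith)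
    have : -|Real.log u| ≤ Real.log u := neg_abs_le _
    have hlog2 : (0:ℝ) ≤ Real.log 2 := Real.log_nonneg (by norm_num)
    linarith
  · have h3 : Real.log (ε + u) ≤ Real.log (1 + u) := Real.log_le_log h2 (by linarith)
    rcases le_total u 1 with h | h
    · have : Real.log (1 + u) ≤ Real.log 2 := Real.log_le_log (by linarith) (by linarith)
      have := abs_nonneg (Real.log u)
      linarith
    · have h4 : Real.log (1 + u) ≤ Real.log (2 * u) := Real.log_le_log (by linarith) (by linarith)
      rw [Real.log_mul (by norm_num) (by linarith)] at h4
      have : Real.log u ≤ |Real.log u| := le_abs_self _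
      linarith

theorem stmt_15 (α μ : ℝ) (hα : 0 < α) (hμ : 0 < μ)
    (C : ℝ → ℝ)
    (hC : ∀ γbar : ℝ, 0 < γbar →
      C γbar = ∫ γ in Set.Ioi (0 : ℝ), Real.log (1 + γ) * alphaMuDensity α μ γbar γ) :
    Tendsto (fun γbar : ℝ => C γbar - Real.log γbar) atTop
      (𝓝 ((2 / α) * (digamma μ - Real.log μ))) := by
  have hp : 0 < α / 2 := by linarith
  have hΓ : 0 < Real.Gamma μ := Real.Gamma_pos_of_pos hμ
  have hμμ : μ ^ μ * μ ^ (-μ) = 1 := by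
    rw [← Real.rpow_add hμ]; simp
  set K : ℝ := α * μ ^ μ / (2 * Real.Gamma μ) with hK
  have hKpos : 0 < K := div_pos (mul_pos hα (Real.rpow_pos_of_pos hμ μ)) (by linarith)
  set G : ℝ → ℝ := fun t => K * (t ^ (α / 2 * μ - 1) * Real.exp (-(μ * t ^ (α / 2)))) with hGdef
  have hg1 : ∀ t ∈ Ioi (0:ℝ), alphaMuDensity α μ 1 t = G t := by
    intro t ht
    have ht0 : (0:ℝ) < t := ht
    unfold alphaMuDensity
    rw [if_neg (not_le.mpr ht0)]
    simp only [Real.one_rpow, div_one, mul_one, hGdef, hK]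
    rw [show α * μ / 2 - 1 = α / 2 * μ - 1 by ring, neg_mul]
    ring
  have hGcont : ContinuousOn G (Ioi 0) := by
    refine continuousOn_const.mul ((contOn_rpow _).mul ?_)
    exact Real.continuous_exp.comp_continuousOn ((continuousOn_const.mul (contOn_rpow (α/2))).neg)
  have hGpos : ∀ t ∈ Ioi (0:ℝ), 0 ≤ G t := fun t ht =>
    le_of_lt (mul_pos hKpos (mul_pos (Real.rpow_pos_of_pos ht _) (Real.exp_pos _)))
  have hPG : IntegrableOn G (Ioi 0) := (integrable_P1 hp hμ).const_mul K
  have hPlogG : IntegrableOn (fun t => |Real.log t| * G t) (Ioi 0) := by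
    have h := (integrable_P2 hp hμ).const_mul K
    refine IntegrableOn.congr_fun h (fun x hx => ?_) measurableSet_Ioi
    simp only [hGdef]; ring
  have hint1 : ∫ t in Ioi (0:ℝ), G t = 1 := by
    simp only [hGdef]
    rw [integral_const_mul, rpow_level_int hp hμ, gamma_scaled_int hμ, hK,
      Real.rpow_neg hμ.le]
    have hX : μ ^ μ ≠ 0 := ne_of_gt (Real.rpow_pos_of_pos hμ μ)
    have hα' : α ≠ 0 := ne_of_gt hα
    have hΓ' : Real.Gamma μ ≠ 0 := ne_of_gt hΓ
    field_simp
  have hlogG : ∫ t in Ioi (0:ℝ), Real.log t * G t = 2 / α * (digamma μ - Real.log μ) := by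
    simp only [hGdef]
    rw [show (fun t : ℝ => Real.log t * (K * (t ^ (α / 2 * μ - 1) * Real.exp (-(μ * t ^ (α / 2))))))
        = fun t : ℝ => K * (Real.log t * (t ^ (α / 2 * μ - 1) * Real.exp (-(μ * t ^ (α / 2)))))
      from funext fun t => by ring]
    rw [integral_const_mul, log_rpow_level_int hp hμ, log_gamma_scaled_int hμ, hK,
      show digamma μ = deriv Real.Gamma μ / Real.Gamma μ from rfl, Real.rpow_neg hμ.le]
    have hX : μ ^ μ ≠ 0 := ne_of_gt (Real.rpow_pos_of_pos hμ μ)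
    have hα' : α ≠ 0 := ne_of_gt hα
    have hΓ' : Real.Gamma μ ≠ 0 := ne_of_gt hΓ
    field_simp
  have hbound : Integrable (fun t => (Real.log 2 + |Real.log t|) * G t) (volume.restrict (Ioi 0)) := by
    have h := (hPG.const_mul (Real.log 2)).add hPlogG
    refine IntegrableOn.congr_fun h (fun x hx => ?_) measurableSet_Ioi
    simp only [Pi.add_apply]; ring
  have haesm : ∀ γbar : ℝ, 1 ≤ γbar →
      AEStronglyMeasurable (fun t => Real.log (γbar⁻¹ + t) * G t) (volume.restrict (Ioi 0)) := by
    intro γbar hγ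
    have hγ0 : (0:ℝ) < γbar := lt_of_lt_of_le one_pos hγ
    refine ContinuousOn.aestronglyMeasurable (ContinuousOn.mul ?_ hGcont) measurableSet_Ioi
    refine ContinuousOn.log (continuous_const.add continuous_id).continuousOn ?_
    intro x hx
    have hx0 : (0:ℝ) < x := hx
    have := inv_pos.mpr hγ0
    exact ne_of_gt (by linarith)
  have hbd : ∀ γbar : ℝ, 1 ≤ γbar → ∀ u ∈ Ioi (0:ℝ),
      ‖Real.log (γbar⁻¹ + u) * G u‖ ≤ (Real.log 2 + |Real.log u|) * G u := by
    intro γbar hγ u hu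
    have hu0 : (0:ℝ) < u := hu
    have hγ0 : (0:ℝ) < γbar := lt_of_lt_of_le one_pos hγ
    have hinv1 : γbar⁻¹ ≤ 1 := by
      nlinarith [inv_pos.mpr hγ0, mul_inv_cancel₀ (ne_of_gt hγ0)]
    have hb := abs_log_add_le (inv_pos.mpr hγ0) hinv1 hu0
    rw [Real.norm_eq_abs, abs_mul, abs_of_nonneg (hGpos u hu)]
    exact mul_le_mul_of_nonneg_right hb (hGpos u hu)
  have hInt2 : ∀ γbar : ℝ, 1 ≤ γbar →
      IntegrableOn (fun u => Real.log (γbar⁻¹ + u) * G u) (Ioi 0) := by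
    intro γbar hγ
    refine hbound.mono' (haesm γbar hγ) ?_
    rw [ae_restrict_iff' measurableSet_Ioi]
    filter_upwards with u hu
    exact hbd γbar hγ u hu
  have hT : Tendsto (fun γbar : ℝ => ∫ t in Ioi (0:ℝ), Real.log (γbar⁻¹ + t) * G t) atTop
      (𝓝 (∫ t in Ioi (0:ℝ), Real.log t * G t)) := by
    refine tendsto_integral_filter_of_dominated_convergence _ ?_ ?_ hbound ?_
    · filter_upwards [eventually_ge_atTop (1:ℝ)] with γbar hγ using haesm γbar hγ
    · filter_upwards [eventually_ge_atTop (1:ℝ)] with γbar hγ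
      rw [ae_restrict_iff' measurableSet_Ioi]
      filter_upwards with u hu
      exact hbd γbar hγ u hu
    · rw [ae_restrict_iff' measurableSet_Ioi]
      filter_upwards with t ht
      have ht0 : (0:ℝ) < t := ht
      have h1 : Tendsto (fun γbar : ℝ => γbar⁻¹ + t) atTop (𝓝 t) := by
        simpa using tendsto_inv_atTop_zero.add_const t
      exact ((Real.continuousAt_log (ne_of_gt ht0)).tendsto.comp h1).mul_const _
  have heq : (fun γbar : ℝ => ∫ t in Ioi (0:ℝ), Real.log (γbar⁻¹ + t) * G t)
      =ᶠ[atTop] fun γbar : ℝ => C γbar - Real.log γbar := by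
    filter_upwards [eventually_ge_atTop (1:ℝ)] with γbar hγ
    have hγ0 : (0:ℝ) < γbar := lt_of_lt_of_le one_pos hγ
    have hb : ∫ γ in Ioi (0:ℝ), Real.log (1 + γ) * alphaMuDensity α μ γbar γ
        = ∫ γ in Ioi (0:ℝ), (fun u => γbar⁻¹ * (Real.log (1 + γbar * u) * G u)) (γbar⁻¹ * γ) := by
      refine setIntegral_congr_fun measurableSet_Ioi fun γ hγ' => ?_
      have hγp : (0:ℝ) < γ := hγ'
      have h2 : (0:ℝ) < γbar⁻¹ * γ := mul_pos (inv_pos.mpr hγ0) hγp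
      dsimp only
      rw [density_scale hγ0 hγp, hg1 _ h2, mul_inv_cancel_left₀ (ne_of_gt hγ0)]
      ring
    have hc := integral_comp_mul_left_Ioi
      (fun u => γbar⁻¹ * (Real.log (1 + γbar * u) * G u)) 0 (inv_pos.mpr hγ0)
    simp only [mul_zero, inv_inv, smul_eq_mul] at hc
    have hsplit : ∫ u in Ioi (0:ℝ), Real.log (1 + γbar * u) * G u
        = (∫ u in Ioi (0:ℝ), Real.log γbar * G u) + ∫ u in Ioi (0:ℝ), Real.log (γbar⁻¹ + u) * G u := by
      rw [← integral_add (hPG.const_mul (Real.log γbar)) (hInt2 γbar hγ)]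
      refine setIntegral_congr_fun measurableSet_Ioi fun u hu => ?_
      have hu0 : (0:ℝ) < u := hu
      have h3 : 1 + γbar * u = γbar * (γbar⁻¹ + u) := by field_simp
      rw [h3, Real.log_mul (ne_of_gt hγ0) (ne_of_gt (add_pos (inv_pos.mpr hγ0) hu0))]
      ring
    rw [hC γbar hγ0, hb, hc, integral_const_mul, ← mul_assoc,
      mul_inv_cancel₀ (ne_of_gt hγ0), one_mul, hsplit, integral_const_mul, hint1, mul_one]
    ring
  have hfinal := hT.congr' heq
  rwa [hlogG] at hfinal
end

section
/- Let α, μ > 0 and ω, ρ, τ > 0. For γ̄ > 0, let C(γ̄) = ∫₀^∞ log(1 + ω·γ/(ρ·γ + τ)) · f_{γ̄}(γ) dγ be the (natural-log) ergodic channel capacity of the impaired system under the α-μ SNR density. Then C(γ̄) tends to log(1 + ω/ρ) as γ̄ → ∞; i.e., the capacity of a hardware-impaired system has the ceiling log₂(1 + ω/ρ) bits, independent of the fading severity parameters α and μ. -/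
open Real MeasureTheory Filter Topology

/-!
Substituting `γ = γ̄ t` turns the capacity into `∫₀^∞ log (1 + g (γ̄ t)) f₁(t) dt`, where `f₁` is the
α-μ density at `γ̄ = 1`, which integrates to one. As `γ̄ → ∞` the integrand tends pointwise
to `log (1 + ω/ρ) f₁(t)` and is dominated by it, since `g` increases to its supremum `ω/ρ`;
dominated convergence gives the limit.
-/

open Set

theorem tendsto_setIntegral_comp_mul_mul_atTop {h p : ℝ → ℝ} {L M : ℝ} (hh : Measurable h)
    (hbound : ∀ x, 0 ≤ x → |h x| ≤ M) (hlim : Tendsto h atTop (𝓝 L))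
    (hp : IntegrableOn p (Ioi 0)) :
    Tendsto (fun s => ∫ t in Ioi 0, h (s * t) * p t) atTop (𝓝 (L * ∫ t in Ioi 0, p t)) := by
  rw [← integral_const_mul]
  refine tendsto_integral_filter_of_dominated_convergence (fun t => M * |p t|) ?_ ?_
    (hp.norm.const_mul M) ?_
  · exact .of_forall fun s =>
      ((hh.comp (measurable_const_mul s)).aestronglyMeasurable).mul hp.aestronglyMeasurable
  · filter_upwards [eventually_ge_atTop 0] with s hs
    filter_upwards [ae_restrict_mem (measurableSet_Ioi (a := (0 : ℝ)))] with t ht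
    rw [norm_mul, Real.norm_eq_abs, Real.norm_eq_abs]
    exact mul_le_mul_of_nonneg_right (hbound _ (mul_nonneg hs (le_of_lt ht))) (abs_nonneg _)
  · filter_upwards [ae_restrict_mem (measurableSet_Ioi (a := (0 : ℝ)))] with t ht
    exact (hlim.comp (tendsto_id.atTop_mul_const ht)).mul_const _

namespace alphaMuDensity

theorem apply_mul_left (α μ : ℝ) {γbar : ℝ} (hγbar : 0 < γbar) (t : ℝ) :
    alphaMuDensity α μ γbar (γbar * t) = γbar⁻¹ * alphaMuDensity α μ 1 t := by
  unfold alphaMuDensity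
  by_cases ht : t ≤ 0
  · rw [if_pos ht, if_pos (mul_nonpos_of_nonneg_of_nonpos hγbar.le ht), mul_zero]
  have ht0 : 0 < t := lt_of_not_ge ht
  rw [if_neg ht, if_neg (not_le.mpr (by positivity)), mul_div_cancel_left₀ _ hγbar.ne', div_one,
    Real.one_rpow, Real.mul_rpow hγbar.le ht0.le, Real.rpow_sub hγbar, Real.rpow_one]
  have : 0 < γbar ^ (α * μ / 2) := by positivity
  field_simp

theorem setIntegral_mul_eq_comp_mul (α μ : ℝ) {γbar : ℝ} (hγbar : 0 < γbar) (F : ℝ → ℝ) :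
    ∫ γ in Ioi 0, F γ * alphaMuDensity α μ γbar γ =
      ∫ t in Ioi 0, F (γbar * t) * alphaMuDensity α μ 1 t := by
  have hsubst := integral_comp_mul_left_Ioi' (fun γ => F γ * alphaMuDensity α μ γbar γ) 0 hγbar
  rw [mul_zero] at hsubst
  rw [← hsubst, smul_eq_mul, ← integral_const_mul]
  refine setIntegral_congr_fun measurableSet_Ioi fun t _ => ?_
  rw [apply_mul_left α μ hγbar]
  field_simp

theorem setIntegral_unit_eq_one (α μ : ℝ) (hα : 0 < α) (hμ : 0 < μ) :
    ∫ t in Ioi 0, alphaMuDensity α μ 1 t = 1 := by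
  have hexp : α * μ / 2 - 1 + 1 = α / 2 * μ := by ring
  have hunfold : EqOn (alphaMuDensity α μ 1) (fun t => (α * μ ^ μ) / (2 * Real.Gamma μ) *
      (t ^ (α * μ / 2 - 1) * Real.exp (-μ * t ^ (α / 2)))) (Ioi 0) := fun t ht => by
    rw [alphaMuDensity, if_neg (not_le.mpr (mem_Ioi.mp ht)), Real.one_rpow, div_one, mul_one]
    ring
  rw [setIntegral_congr_fun measurableSet_Ioi hunfold, integral_const_mul,
    integral_rpow_mul_exp_neg_mul_rpow (by positivity) (by nlinarith) hμ, hexp,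
    neg_div, mul_div_cancel_left₀ _ (by positivity : α / 2 ≠ 0), Real.rpow_neg hμ.le]
  have : 0 < Real.Gamma μ := Real.Gamma_pos_of_pos hμ
  have : 0 < μ ^ μ := by positivity
  field_simp

theorem integrableOn_unit (α μ : ℝ) (hα : 0 < α) (hμ : 0 < μ) :
    IntegrableOn (alphaMuDensity α μ 1) (Ioi 0) :=
  Integrable.of_integral_ne_zero (by rw [setIntegral_unit_eq_one α μ hα hμ]; exact one_ne_zero)

end alphaMuDensity

section ImpairedSINR

variable {ω ρ τ : ℝ}

theorem tendsto_mul_div_mul_add_atTop (hρ : ρ ≠ 0) :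
    Tendsto (fun x => ω * x / (ρ * x + τ)) atTop (𝓝 (ω / ρ)) := by
  have hlim : Tendsto (fun x => ω / (ρ + τ / x)) atTop (𝓝 (ω / (ρ + 0))) :=
    tendsto_const_nhds.div (tendsto_const_nhds.add (tendsto_const_nhds.div_atTop tendsto_id))
      (by simpa using hρ)
  rw [add_zero] at hlim
  refine hlim.congr' ?_
  filter_upwards [eventually_gt_atTop 0] with x hx
  rw [← mul_div_mul_right ω _ hx.ne', add_mul, div_mul_cancel₀ _ hx.ne']

theorem abs_log_one_add_mul_div_mul_add_le (hω : 0 ≤ ω) (hρ : 0 < ρ) (hτ : 0 < τ) {x : ℝ}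
    (hx : 0 ≤ x) : |Real.log (1 + ω * x / (ρ * x + τ))| ≤ Real.log (1 + ω / ρ) := by
  have hden : 0 < ρ * x + τ := by positivity
  have hnonneg : 0 ≤ ω * x / (ρ * x + τ) := by positivity
  have hle : ω * x / (ρ * x + τ) ≤ ω / ρ := by
    rw [div_le_div_iff₀ hden hρ]
    nlinarith
  rw [abs_of_nonneg (Real.log_nonneg (by linarith))]
  exact Real.log_le_log (by linarith) (by linarith)

end ImpairedSINR

theorem stmt_16 (α μ : ℝ) (hα : 0 < α) (hμ : 0 < μ)
    (ω ρ τ : ℝ) (hω : 0 < ω) (hρ : 0 < ρ) (hτ : 0 < τ)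
    (C : ℝ → ℝ)
    (hC : ∀ γbar : ℝ, 0 < γbar →
      C γbar = ∫ γ in Set.Ioi (0 : ℝ),
        Real.log (1 + ω * γ / (ρ * γ + τ)) * alphaMuDensity α μ γbar γ) :
    Tendsto C atTop (𝓝 (Real.log (1 + ω / ρ))) := by
  have hlim := tendsto_setIntegral_comp_mul_mul_atTop (p := alphaMuDensity α μ 1)
    (by fun_prop : Measurable fun x => Real.log (1 + ω * x / (ρ * x + τ)))
    (fun x hx => abs_log_one_add_mul_div_mul_add_le hω.le hρ hτ hx)
    ((tendsto_mul_div_mul_add_atTop hρ.ne').const_add 1 |>.log (by positivity))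
    (alphaMuDensity.integrableOn_unit α μ hα hμ)
  rw [alphaMuDensity.setIntegral_unit_eq_one α μ hα hμ, mul_one] at hlim
  refine hlim.congr' ?_
  filter_upwards [eventually_gt_atTop 0] with γbar hγbar
  rw [hC γbar hγbar, alphaMuDensity.setIntegral_mul_eq_comp_mul α μ hγbar]
end

section
/- Let α, μ > 0, let ω, ρ, τ > 0 be impairment parameters, and let δ > 0. Then ∫₀^∞ exp(−δ·ω·γ/(ρ·γ + τ)) · f_{γ̄}(γ) dγ tends to exp(−δ·ω/ρ) as γ̄ → ∞. Consequently, for an exponential-type SEP H(γ) = Σ_{n=0}^{N} θ_n·exp(−δ_n·γ) with θ_n ≥ 0 and δ_n > 0, the average symbol error probability of the impaired system tends to the error floor Σ_{n=0}^{N} θ_n·exp(−δ_n·ω/ρ) as γ̄ → ∞, a ceiling independent of the fading severity parameters α and μ. -/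
/-!
The average SNR `γbar` is a scale parameter of the α-μ law: `γbar * f_γbar (γbar * u) = f_1 u`.
Substituting `γ = γbar * u`, the average of any bounded function `h` against `f_γbar` becomes
`∫ h (γbar * u) f_1(u) du`, which by dominated convergence tends to `lim_{x → ∞} h x` as
`γbar → ∞`, because `f_1` is a probability density. For `h = H ∘ g` with `H` continuous, `g` is
bounded on `(0, ∞)` and `g x → ω / ρ`, so the averaged SEP tends to `H (ω / ρ)`.
-/

open Real MeasureTheory Filter Topology Finset

lemma alphaMuDensity_one_of_pos (α μ : ℝ) {u : ℝ} (hu : 0 < u) :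
    alphaMuDensity α μ 1 u =
      α * μ ^ μ / (2 * Gamma μ) * (u ^ (α * μ / 2 - 1) * exp (-μ * u ^ (α / 2))) := by
  rw [alphaMuDensity, if_neg hu.not_ge, one_rpow, mul_one, div_one, mul_assoc]

lemma mul_alphaMuDensity_mul (α μ : ℝ) {b : ℝ} (hb : 0 < b) (u : ℝ) :
    b * alphaMuDensity α μ b (b * u) = alphaMuDensity α μ 1 u := by
  rcases le_or_gt u 0 with hu | hu
  · rw [alphaMuDensity, alphaMuDensity, if_pos (mul_nonpos_of_nonneg_of_nonpos hb.le hu),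
      if_pos hu, mul_zero]
  rw [alphaMuDensity, if_neg (mul_pos hb hu).not_ge, alphaMuDensity_one_of_pos α μ hu,
    mul_div_cancel_left₀ u hb.ne', mul_rpow hb.le hu.le, rpow_sub hb, rpow_one]
  have : b ^ (α * μ / 2) ≠ 0 := (rpow_pos_of_pos hb _).ne'
  field_simp

lemma integrableOn_alphaMuDensity_one {α μ : ℝ} (hα : 0 < α) (hμ : 0 < μ) :
    IntegrableOn (alphaMuDensity α μ 1) (Set.Ioi 0) :=
  IntegrableOn.congr_fun
    ((integrableOn_rpow_mul_exp_neg_mul_rpow (by nlinarith) (by linarith) hμ).const_mul _)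
    (fun _ hu => (alphaMuDensity_one_of_pos α μ hu).symm) measurableSet_Ioi

lemma integral_alphaMuDensity_one {α μ : ℝ} (hα : 0 < α) (hμ : 0 < μ) :
    ∫ u in Set.Ioi 0, alphaMuDensity α μ 1 u = 1 := by
  rw [setIntegral_congr_fun measurableSet_Ioi (fun _ hu => alphaMuDensity_one_of_pos α μ hu),
    integral_const_mul, integral_rpow_mul_exp_neg_mul_rpow (by linarith) (by nlinarith) hμ]
  have hexp : (α * μ / 2 - 1 + 1) / (α / 2) = μ := by field_simp; ring
  rw [hexp, show -(α * μ / 2 - 1 + 1) / (α / 2) = -μ by rw [neg_div, hexp], rpow_neg hμ.le]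
  have : Gamma μ ≠ 0 := (Gamma_pos_of_pos hμ).ne'
  have : μ ^ μ ≠ 0 := (rpow_pos_of_pos hμ _).ne'
  field_simp

lemma setIntegral_mul_alphaMuDensity (α μ : ℝ) (F : ℝ → ℝ) {b : ℝ} (hb : 0 < b) :
    ∫ γ in Set.Ioi 0, F γ * alphaMuDensity α μ b γ =
      ∫ u in Set.Ioi 0, F (b * u) * alphaMuDensity α μ 1 u := by
  rw [← mul_zero b, ← integral_comp_mul_left_Ioi' _ 0 hb, mul_zero, smul_eq_mul,
    ← integral_const_mul]
  refine setIntegral_congr_fun measurableSet_Ioi (fun u _ => ?_)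
  rw [← mul_alphaMuDensity_mul α μ hb u]
  ring

lemma tendsto_setIntegral_comp_mul_mul {p h : ℝ → ℝ} {C L : ℝ}
    (hp : IntegrableOn p (Set.Ioi 0)) (hh : Measurable h) (hC : ∀ x > 0, ‖h x‖ ≤ C)
    (hL : Tendsto h atTop (𝓝 L)) :
    Tendsto (fun b => ∫ u in Set.Ioi 0, h (b * u) * p u) atTop
      (𝓝 (∫ u in Set.Ioi 0, L * p u)) := by
  refine tendsto_integral_filter_of_dominated_convergence (fun u => C * ‖p u‖)
    (Eventually.of_forall fun b => ?_) ?_ (hp.norm.const_mul C) ?_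
  · exact ((hh.comp (measurable_const_mul b)).aestronglyMeasurable).mul hp.aestronglyMeasurable
  · filter_upwards [eventually_gt_atTop 0] with b hb
    filter_upwards [ae_restrict_mem measurableSet_Ioi] with u (hu : 0 < u)
    rw [norm_mul]
    exact mul_le_mul_of_nonneg_right (hC _ (mul_pos hb hu)) (norm_nonneg _)
  · filter_upwards [ae_restrict_mem measurableSet_Ioi] with u (hu : 0 < u)
    exact (hL.comp (tendsto_id.atTop_mul_const hu)).mul_const _

noncomputable def impairedSINR (ω ρ τ x : ℝ) : ℝ := ω * x / (ρ * x + τ)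

lemma measurable_impairedSINR (ω ρ τ : ℝ) : Measurable (impairedSINR ω ρ τ) := by
  unfold impairedSINR
  fun_prop

lemma abs_impairedSINR_le (ω : ℝ) {ρ τ x : ℝ} (hρ : 0 < ρ) (hτ : 0 < τ) (hx : 0 < x) :
    |impairedSINR ω ρ τ x| ≤ |ω| / ρ := by
  have hden : 0 < ρ * x + τ := by positivity
  rw [impairedSINR, abs_div, abs_mul, abs_of_pos hx, abs_of_pos hden, div_le_div_iff₀ hden hρ]
  nlinarith [mul_nonneg (abs_nonneg ω) hτ.le]

lemma tendsto_impairedSINR (ω : ℝ) {ρ : ℝ} (hρ : 0 < ρ) (τ : ℝ) :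
    Tendsto (impairedSINR ω ρ τ) atTop (𝓝 (ω / ρ)) := by
  have h : Tendsto (fun x : ℝ => ω / (ρ + τ / x)) atTop (𝓝 (ω / (ρ + 0))) :=
    tendsto_const_nhds.div (tendsto_const_nhds.add (tendsto_const_nhds.div_atTop tendsto_id))
      (by simpa using hρ.ne')
  rw [add_zero] at h
  refine h.congr' ?_
  filter_upwards [eventually_gt_atTop 0] with x hx
  rw [impairedSINR]
  field_simp

theorem tendsto_setIntegral_comp_impairedSINR_mul_alphaMuDensity {α μ ω ρ τ : ℝ}
    (hα : 0 < α) (hμ : 0 < μ) (hρ : 0 < ρ) (hτ : 0 < τ) {H : ℝ → ℝ} (hH : Continuous H) :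
    Tendsto (fun γbar => ∫ γ in Set.Ioi 0, H (impairedSINR ω ρ τ γ) * alphaMuDensity α μ γbar γ)
      atTop (𝓝 (H (ω / ρ))) := by
  obtain ⟨C, hC⟩ :=
    (isCompact_closedBall (0 : ℝ) (|ω| / ρ)).exists_bound_of_continuousOn hH.continuousOn
  have hlim := tendsto_setIntegral_comp_mul_mul (integrableOn_alphaMuDensity_one hα hμ)
    (hH.measurable.comp (measurable_impairedSINR ω ρ τ))
    (fun x hx => hC _ (mem_closedBall_zero_iff.2 (abs_impairedSINR_le ω hρ hτ hx)))
    ((hH.tendsto _).comp (tendsto_impairedSINR ω hρ τ))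
  rw [integral_const_mul, integral_alphaMuDensity_one hα hμ, mul_one] at hlim
  refine hlim.congr' ?_
  filter_upwards [eventually_gt_atTop 0] with b hb
  exact (setIntegral_mul_alphaMuDensity α μ _ hb).symm

theorem stmt_18_general (α μ : ℝ) (hα : 0 < α) (hμ : 0 < μ)
    (ω ρ τ : ℝ) (hρ : 0 < ρ) (hτ : 0 < τ) (δ : ℝ) :
    Tendsto (fun γbar : ℝ =>
        ∫ γ in Set.Ioi (0 : ℝ),
          Real.exp (-δ * (ω * γ / (ρ * γ + τ))) * alphaMuDensity α μ γbar γ) atTop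
      (𝓝 (Real.exp (-δ * ω / ρ))) ∧
    ∀ (N : ℕ) (θ δs : ℕ → ℝ), (∀ n, 0 ≤ θ n) → (∀ n, 0 < δs n) →
      Tendsto (fun γbar : ℝ =>
          ∫ γ in Set.Ioi (0 : ℝ),
            (∑ n ∈ Finset.range (N + 1), θ n * Real.exp (-(δs n) * (ω * γ / (ρ * γ + τ)))) *
              alphaMuDensity α μ γbar γ) atTop
        (𝓝 (∑ n ∈ Finset.range (N + 1), θ n * Real.exp (-(δs n) * ω / ρ))) := by
  refine ⟨?_, fun N θ δs _ _ => ?_⟩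
  · have h := tendsto_setIntegral_comp_impairedSINR_mul_alphaMuDensity (ω := ω) hα hμ hρ hτ
      (H := fun x => exp (-δ * x)) (by fun_prop)
    simpa only [impairedSINR, mul_div_assoc] using h
  · have h := tendsto_setIntegral_comp_impairedSINR_mul_alphaMuDensity (ω := ω) hα hμ hρ hτ
      (H := fun x => ∑ n ∈ range (N + 1), θ n * exp (-δs n * x)) (by fun_prop)
    simpa only [impairedSINR, mul_div_assoc] using h

theorem stmt_18 (α μ : ℝ) (hα : 0 < α) (hμ : 0 < μ)
    (ω ρ τ : ℝ) (hω : 0 < ω) (hρ : 0 < ρ) (hτ : 0 < τ) (δ : ℝ) (hδ : 0 < δ) :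
    Tendsto (fun γbar : ℝ =>
        ∫ γ in Set.Ioi (0 : ℝ),
          Real.exp (-δ * (ω * γ / (ρ * γ + τ))) * alphaMuDensity α μ γbar γ) atTop
      (𝓝 (Real.exp (-δ * ω / ρ))) ∧
    ∀ (N : ℕ) (θ δs : ℕ → ℝ), (∀ n, 0 ≤ θ n) → (∀ n, 0 < δs n) →
      Tendsto (fun γbar : ℝ =>
          ∫ γ in Set.Ioi (0 : ℝ),
            (∑ n ∈ Finset.range (N + 1), θ n * Real.exp (-(δs n) * (ω * γ / (ρ * γ + τ)))) *
              alphaMuDensity α μ γbar γ) atTop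
        (𝓝 (∑ n ∈ Finset.range (N + 1), θ n * Real.exp (-(δs n) * ω / ρ))) :=
  stmt_18_general α μ hα hμ ω ρ τ hρ hτ δ
end

section
/- Let X be a nonnegative real random variable on a probability space and let ω, ρ, τ > 0. Then the ergodic capacity of the impaired system satisfies E[log(1 + ω·X/(ρ·X + τ))] ≤ log(1 + ω/ρ); i.e., for any fading distribution whatsoever, the channel capacity of a system with residual hardware impairments cannot exceed log₂(1 + ω/ρ) bits. -/
open Real MeasureTheory

theorem stmt_19 {Ω : Type*} [MeasurableSpace Ω] (P : Measure Ω) [IsProbabilityMeasure P]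
    (X : Ω → ℝ) (hX : Measurable X) (hX0 : ∀ a, 0 ≤ X a)
    (ω ρ τ : ℝ) (hω : 0 < ω) (hρ : 0 < ρ) (hτ : 0 < τ) :
    ∫ a, Real.log (1 + ω * X a / (ρ * X a + τ)) ∂P ≤ Real.log (1 + ω / ρ) := by
  have key : ∀ a, Real.log (1 + ω * X a / (ρ * X a + τ)) ≤ Real.log (1 + ω / ρ) := by
    intro a
    have hx := hX0 a
    have hden : 0 < ρ * X a + τ := by positivity
    apply Real.log_le_log (by positivity)
    gcongr 1 + ?_
    rw [div_le_div_iff₀ hden hρ]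
    nlinarith
  have hnn : ∀ a, (0:ℝ) ≤ Real.log (1 + ω * X a / (ρ * X a + τ)) := by
    intro a
    have hx := hX0 a
    have hden : 0 < ρ * X a + τ := by positivity
    apply Real.log_nonneg
    have : 0 ≤ ω * X a / (ρ * X a + τ) := by positivity
    linarith
  calc ∫ a, Real.log (1 + ω * X a / (ρ * X a + τ)) ∂P
      ≤ ∫ _, Real.log (1 + ω / ρ) ∂P := by
        apply integral_mono_of_nonneg
        · exact Filter.Eventually.of_forall hnn
        · exact integrable_const _
        · exact Filter.Eventually.of_forall key
    _ = Real.log (1 + ω / ρ) := by simp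
end
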